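/- arXiv:2202.08977 — 5 statements merged into one kernel-verified Lean document; each statement's English description precedes it below -/
import Mathlib

section
/- Let H be a Hilbert space, K a bounded injective operator on H with K*K injective, P an orthogonal projection, and P⊥ = Id - P. Define φ_F = P φ† and φ_{K_F} = (P K* K P)⁻¹ P K* K φ† (the minimizer of ‖K(φ† - φ)‖ over ran(P)). Then φ_{K_F} = φ_F if and only if P K* K P⊥ φ† = 0; in particular, if K P⊥ φ† = 0 then the two fair approximations coincide. -/
/-- Comparison of the two fair approximations. With `φ_F = P φ†` and
`φ_{K_F} = (P K* K P)⁻¹ P K* K φ†` (where `B` is the inverse of `P K* K P` on `ran P`),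
we have `φ_{K_F} = φ_F` iff `P K* K P⊥ φ† = 0`; in particular `K P⊥ φ† = 0` implies the
two fair approximations coincide. -/
theorem fair_approximations_coincide_iff
    {H : Type*} [NormedAddCommGroup H] [InnerProductSpace ℝ H] [CompleteSpace H]
    (K P B : H →L[ℝ] H)
    (hK_inj : Function.Injective K) (hKK_inj : Function.Injective (K.adjoint ∘L K))
    (hP_sa : IsSelfAdjoint P) (hP_idem : P ∘L P = P)
    (hB_left : ∀ x ∈ Set.range P, B ((P ∘L K.adjoint ∘L K ∘L P) x) = x)
    (hB_right : ∀ x ∈ Set.range P, (P ∘L K.adjoint ∘L K ∘L P) (B x) = x)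
    (hB_range : ∀ x, B x ∈ Set.range P)
    (φd : H) :
    (B (P (K.adjoint (K φd))) = P φd ↔ P (K.adjoint (K ((1 - P) φd))) = 0) ∧
    (K ((1 - P) φd) = 0 → B (P (K.adjoint (K φd))) = P φd) := by
  set t := P (K.adjoint (K ((1 - P) φd))) with ht
  have hPP : ∀ x, P (P x) = P x := fun x => by
    have := congrArg (fun T : H →L[ℝ] H => T x) hP_idem
    simpa using this
  have h1 : B (P (K.adjoint (K (P φd)))) = P φd := by
    have := hB_left (P φd) ⟨φd, rfl⟩
    simpa [ContinuousLinearMap.comp_apply, hPP] using this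
  have hsplit : K.adjoint (K φd) = K.adjoint (K (P φd)) + K.adjoint (K ((1 - P) φd)) := by
    rw [← map_add, ← map_add]
    congr 1
    simp [ContinuousLinearMap.sub_apply]
  have h2 : B (P (K.adjoint (K φd))) = P φd + B t := by
    rw [hsplit, map_add, map_add, h1, ht]
  have hBt : B t = 0 ↔ t = 0 := by
    constructor
    · intro h
      have := hB_right t ⟨_, rfl⟩
      rw [h] at this
      simpa using this.symm
    · intro h; simp [h]
  have hiff : B (P (K.adjoint (K φd))) = P φd ↔ t = 0 := by
    rw [h2, ← hBt]
    constructor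
    · intro h
      have : P φd + B t = P φd + 0 := by simpa using h
      exact add_left_cancel this
    · intro h; rw [h, add_zero]
  refine ⟨hiff, fun h => ?_⟩
  rw [hiff, ht, h]
  simp
end

section
/- Let K, F be bounded operators on a Hilbert space H, α > 0, ρ > 0, and r ∈ H with ‖K* r‖ ≤ M. Let φ_α = (α Id + K*K)⁻¹ K* r and φ_{α,ρ} = (α Id + ρ F*F + K*K)⁻¹ K* r. Then ‖φ_α - φ_{α,ρ}‖ ≤ (ρ/α²)·‖F*F‖·M. -/
/-!
Both operators are of the form `α • 1 + T` with `T` positive, hence coercive with constant `α`: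
by Lax–Milgram they are invertible with inverses of norm at most `1 / α`. The resolvent identity
`A⁻¹ - B⁻¹ = A⁻¹ (B - A) B⁻¹` with `B - A = ρ • F†F` then gives the bound.
-/

open RealInnerProductSpace

namespace ContinuousLinearMap

variable {H : Type*} [NormedAddCommGroup H] [InnerProductSpace ℝ H]

theorem mul_norm_le_norm_apply_of_coercive {A : H →L[ℝ] H} {α : ℝ}
    (hA : ∀ x, α * ‖x‖ * ‖x‖ ≤ ⟪A x, x⟫) (x : H) : α * ‖x‖ ≤ ‖A x‖ := by
  rcases eq_or_ne x 0 with rfl | hx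
  · simp
  have hx : 0 < ‖x‖ := norm_pos_iff.mpr hx
  refine le_of_mul_le_mul_right ?_ hx
  calc α * ‖x‖ * ‖x‖ ≤ ⟪A x, x⟫ := hA x
    _ ≤ ‖A x‖ * ‖x‖ := real_inner_le_norm _ _

theorem smul_one_add_coercive_of_isPositive {T : H →L[ℝ] H} (hT : T.IsPositive) (α : ℝ) (x : H) :
    α * ‖x‖ * ‖x‖ ≤ ⟪(α • (1 : H →L[ℝ] H) + T) x, x⟫ := by
  have hTx := hT.inner_nonneg_left x
  rw [add_apply, inner_add_left, smul_apply, one_apply_eq_self, real_inner_smul_left,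
    real_inner_self_eq_norm_mul_norm]
  linarith

variable [CompleteSpace H] {A B : H →L[ℝ] H} {α : ℝ}

theorem isUnit_of_coercive (hα : 0 < α) (hA : ∀ x, α * ‖x‖ * ‖x‖ ≤ ⟪A x, x⟫) : IsUnit A := by
  have coercive : IsCoercive ((innerSL ℝ).comp A) := ⟨α, hα, hA⟩
  set e := coercive.continuousLinearEquivOfBilin
  have he : (e : H →L[ℝ] H) = A := by
    ext v
    refine ext_inner_right ℝ fun w => ?_
    exact coercive.continuousLinearEquivOfBilin_apply v w
  exact ⟨(ContinuousLinearEquiv.unitsEquiv ℝ H).symm e, he⟩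

theorem norm_inverse_apply_le_of_coercive (hα : 0 < α)
    (hA : ∀ x, α * ‖x‖ * ‖x‖ ≤ ⟪A x, x⟫) (y : H) : ‖Ring.inverse A y‖ ≤ ‖y‖ / α := by
  have hy : A (Ring.inverse A y) = y := by
    simpa using congr($(Ring.mul_inverse_cancel A (isUnit_of_coercive hα hA)) y)
  rw [le_div_iff₀ hα, mul_comm]
  simpa only [hy] using mul_norm_le_norm_apply_of_coercive hA (Ring.inverse A y)

theorem norm_inverse_apply_sub_inverse_apply_le_of_coercive (hα : 0 < α)
    (hA : ∀ x, α * ‖x‖ * ‖x‖ ≤ ⟪A x, x⟫) (hB : ∀ x, α * ‖x‖ * ‖x‖ ≤ ⟪B x, x⟫) (y : H) :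
    ‖Ring.inverse A y - Ring.inverse B y‖ ≤ ‖B - A‖ * ‖y‖ / α ^ 2 := by
  have resolvent : Ring.inverse A y - Ring.inverse B y =
      Ring.inverse A ((B - A) (Ring.inverse B y)) := by
    simpa using congr($(Ring.inverse_sub_inverse (a := A) (b := B)
      (iff_of_true (isUnit_of_coercive hα hA) (isUnit_of_coercive hα hB))) y)
  rw [resolvent]
  calc ‖Ring.inverse A ((B - A) (Ring.inverse B y))‖
      ≤ ‖(B - A) (Ring.inverse B y)‖ / α := norm_inverse_apply_le_of_coercive hα hA _
    _ ≤ ‖B - A‖ * (‖y‖ / α) / α := by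
        gcongr
        exact (le_opNorm _ _).trans
          (by gcongr; exact norm_inverse_apply_le_of_coercive hα hB y)
    _ = ‖B - A‖ * ‖y‖ / α ^ 2 := by ring

end ContinuousLinearMap

open ContinuousLinearMap in
/-- Price for fairness. With `φ_α = (α Id + K*K)⁻¹ K* r` and
`φ_{α,ρ} = (α Id + ρ F*F + K*K)⁻¹ K* r`, and `‖K* r‖ ≤ M`, we have
`‖φ_α - φ_{α,ρ}‖ ≤ (ρ/α²)·‖F*F‖·M`. -/
theorem price_for_fairness
    {H : Type*} [NormedAddCommGroup H] [InnerProductSpace ℝ H] [CompleteSpace H]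
    (K F : H →L[ℝ] H) (α ρ M : ℝ) (hα : 0 < α) (hρ : 0 < ρ)
    (r : H) (hM : ‖K.adjoint r‖ ≤ M) :
    ‖Ring.inverse (α • (1 : H →L[ℝ] H) + K.adjoint ∘L K) (K.adjoint r)
        - Ring.inverse (α • (1 : H →L[ℝ] H) + ρ • (F.adjoint ∘L F) + K.adjoint ∘L K)
            (K.adjoint r)‖
      ≤ ρ / α ^ 2 * ‖F.adjoint ∘L F‖ * M := by
  have hK := isPositive_adjoint_comp_self K
  have hFK := ((isPositive_adjoint_comp_self F).smul_of_nonneg hρ.le).add hK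
  have hdiff : α • (1 : H →L[ℝ] H) + ρ • (F.adjoint ∘L F) + K.adjoint ∘L K
      - (α • 1 + K.adjoint ∘L K) = ρ • (F.adjoint ∘L F) := by abel
  refine (norm_inverse_apply_sub_inverse_apply_le_of_coercive hα
    (smul_one_add_coercive_of_isPositive hK α)
    (by simpa only [add_assoc] using smul_one_add_coercive_of_isPositive hFK α) _).trans ?_
  rw [hdiff, norm_smul, Real.norm_of_nonneg hρ.le]
  calc ρ * ‖F.adjoint ∘L F‖ * ‖K.adjoint r‖ / α ^ 2
      ≤ ρ * ‖F.adjoint ∘L F‖ * M / α ^ 2 := by gcongr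
    _ = ρ / α ^ 2 * ‖F.adjoint ∘L F‖ * M := by ring
end

section
/- Let T be a compact positive self-adjoint operator on a Hilbert space H with spectral decomposition T = Σ λ_j² ⟨·,e_j⟩ e_j. For ψ ∈ H, the vectors (Id + ρT)⁻¹ψ converge as ρ → ∞ to the orthogonal projection of ψ onto ker(T). -/
/-!
For `ρ ≥ 0` the operator `1 + ρ T` satisfies `‖x‖² ≤ ⟪(1 + ρ T) x, x⟫`, so by Lax–Milgram it is
invertible and its inverse `R ρ` is a contraction. `R ρ` fixes `ker T`, and on the range of `T`
we have `R ρ (T w) = ρ⁻¹ (w - R ρ w) → 0`. Since the `R ρ` are uniformly bounded, `R ρ → 0`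
pointwise on the closure of the range of `T`, which for self-adjoint `T` is `(ker T)ᗮ`.
-/

open Filter Topology RealInnerProductSpace

theorem tendsto_apply_zero_of_mem_closure {ι 𝕜 E F : Type*} [NontriviallyNormedField 𝕜]
    [SeminormedAddCommGroup E] [NormedSpace 𝕜 E] [SeminormedAddCommGroup F] [NormedSpace 𝕜 F]
    {l : Filter ι} {R : ι → E →L[𝕜] F} {C : ℝ} (hR : ∀ᶠ i in l, ‖R i‖ ≤ C) {s : Set E}
    (hs : ∀ y ∈ s, Tendsto (fun i ↦ R i y) l (𝓝 0)) {x : E} (hx : x ∈ closure s) :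
    Tendsto (fun i ↦ R i x) l (𝓝 0) := by
  rw [Metric.tendsto_nhds]
  intro ε hε
  have hC : 0 < |C| + 1 := by positivity
  obtain ⟨y, hy, hxy⟩ := Metric.mem_closure_iff.mp hx (ε / 2 / (|C| + 1)) (by positivity)
  filter_upwards [hR, Metric.tendsto_nhds.mp (hs y hy) (ε / 2) (half_pos hε)] with i hRi hyi
  rw [dist_zero_right] at hyi ⊢
  rw [dist_eq_norm, lt_div_iff₀ hC] at hxy
  calc ‖R i x‖ ≤ ‖R i (x - y)‖ + ‖R i y‖ := by simpa using norm_add_le (R i (x - y)) (R i y)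
    _ ≤ C * ‖x - y‖ + ‖R i y‖ := by gcongr; exact (R i).le_of_opNorm_le hRi _
    _ < ε := by nlinarith [le_abs_self C, norm_nonneg (x - y)]

section Coercive

variable {H : Type*} [NormedAddCommGroup H] [InnerProductSpace ℝ H] {A : H →L[ℝ] H}

theorem norm_le_norm_apply_of_norm_sq_le_inner (hA : ∀ x, ‖x‖ ^ 2 ≤ ⟪A x, x⟫) (x : H) :
    ‖x‖ ≤ ‖A x‖ := by
  nlinarith [hA x, real_inner_le_norm (A x) x, norm_nonneg x, norm_nonneg (A x)]

theorem isUnit_of_norm_sq_le_inner [CompleteSpace H] (hA : ∀ x, ‖x‖ ^ 2 ≤ ⟪A x, x⟫) :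
    IsUnit A := by
  have hB : IsCoercive ((innerSL ℝ).comp A) :=
    ⟨1, one_pos, fun u ↦ by simpa [sq, real_inner_comm] using hA u⟩
  have hEq : (hB.continuousLinearEquivOfBilin : H →L[ℝ] H) = A := by
    ext v
    exact ext_inner_right ℝ fun w ↦ by simp [hB.continuousLinearEquivOfBilin_apply v w]
  exact hEq ▸ ⟨hB.continuousLinearEquivOfBilin.toUnit, rfl⟩

theorem norm_ringInverse_le_one_of_norm_sq_le_inner [CompleteSpace H]
    (hA : ∀ x, ‖x‖ ^ 2 ≤ ⟪A x, x⟫) : ‖Ring.inverse A‖ ≤ 1 := by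
  refine (Ring.inverse A).opNorm_le_bound zero_le_one fun y ↦ ?_
  have hAR : A (Ring.inverse A y) = y := by
    rw [← mul_apply_eq_comp, Ring.mul_inverse_cancel A (isUnit_of_norm_sq_le_inner hA),
      one_apply_eq_self]
  simpa [hAR] using norm_le_norm_apply_of_norm_sq_le_inner hA (Ring.inverse A y)

end Coercive

section Penalized

variable {H : Type*} [NormedAddCommGroup H] [InnerProductSpace ℝ H] {T : H →L[ℝ] H} {ρ : ℝ}

theorem norm_sq_le_inner_one_add_smul_apply (hT : ∀ x, 0 ≤ ⟪T x, x⟫) (hρ : 0 ≤ ρ) (x : H) :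
    ‖x‖ ^ 2 ≤ ⟪(1 + ρ • T) x, x⟫ := by
  simp only [add_apply, one_apply_eq_self,
    smul_apply, inner_add_left, real_inner_smul_left,
    real_inner_self_eq_norm_sq]
  nlinarith [hT x]

variable [CompleteSpace H]

theorem ringInverse_one_add_smul_apply_one_add_smul_apply (hT : ∀ x, 0 ≤ ⟪T x, x⟫) (hρ : 0 ≤ ρ)
    (x : H) : Ring.inverse (1 + ρ • T) ((1 + ρ • T) x) = x := by
  rw [← mul_apply_eq_comp, Ring.inverse_mul_cancel _
    (isUnit_of_norm_sq_le_inner (norm_sq_le_inner_one_add_smul_apply hT hρ)),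
    one_apply_eq_self]

theorem ringInverse_one_add_smul_apply_of_apply_eq_zero (hT : ∀ x, 0 ≤ ⟪T x, x⟫) (hρ : 0 ≤ ρ)
    {x : H} (hx : T x = 0) : Ring.inverse (1 + ρ • T) x = x := by
  simpa [hx] using ringInverse_one_add_smul_apply_one_add_smul_apply hT hρ x

theorem ringInverse_one_add_smul_apply_apply (hT : ∀ x, 0 ≤ ⟪T x, x⟫) (hρ : 0 < ρ) (w : H) :
    Ring.inverse (1 + ρ • T) (T w) = ρ⁻¹ • (w - Ring.inverse (1 + ρ • T) w) := by
  have hTw : T w = ρ⁻¹ • ((1 + ρ • T) w - w) := by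
    simp [smul_smul, inv_mul_cancel₀ hρ.ne']
  rw [hTw, map_smul, map_sub, ringInverse_one_add_smul_apply_one_add_smul_apply hT hρ.le]

theorem norm_ringInverse_one_add_smul_le_one (hT : ∀ x, 0 ≤ ⟪T x, x⟫) (hρ : 0 ≤ ρ) :
    ‖Ring.inverse (1 + ρ • T)‖ ≤ 1 :=
  norm_ringInverse_le_one_of_norm_sq_le_inner (norm_sq_le_inner_one_add_smul_apply hT hρ)

theorem tendsto_ringInverse_one_add_smul_apply_apply (hT : ∀ x, 0 ≤ ⟪T x, x⟫) (w : H) :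
    Tendsto (fun ρ : ℝ ↦ Ring.inverse (1 + ρ • T) (T w)) atTop (𝓝 0) := by
  have hbdd : IsBoundedUnder (· ≤ ·) atTop fun ρ : ℝ ↦ ‖w - Ring.inverse (1 + ρ • T) w‖ := by
    refine isBoundedUnder_of_eventually_le (a := 2 * ‖w‖) ?_
    filter_upwards [eventually_ge_atTop 0] with ρ hρ
    have hRw := (Ring.inverse (1 + ρ • T)).le_of_opNorm_le
      (norm_ringInverse_one_add_smul_le_one hT hρ) w
    linarith [norm_sub_le w (Ring.inverse (1 + ρ • T) w)]
  refine (tendsto_inv_atTop_zero.zero_smul_isBoundedUnder_le hbdd).congr' ?_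
  filter_upwards [eventually_gt_atTop 0] with ρ hρ
  exact (ringInverse_one_add_smul_apply_apply hT hρ w).symm

end Penalized

theorem penalized_resolvent_tendsto_kernel_projection_general
    {H : Type*} [NormedAddCommGroup H] [InnerProductSpace ℝ H] [CompleteSpace H]
    (T : H →L[ℝ] H) (hT_sa : IsSelfAdjoint T)
    (hT_pos : ∀ x : H, 0 ≤ (inner ℝ (T x) x : ℝ)) (ψ : H) :
    Filter.Tendsto
      (fun ρ : ℝ => Ring.inverse ((1 : H →L[ℝ] H) + ρ • T) ψ)
      Filter.atTop
      (nhds ((Submodule.orthogonalProjectionOnto (LinearMap.ker (T : H →ₗ[ℝ] H)) ψ : LinearMap.ker (T : H →ₗ[ℝ] H)) : H)) := by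
  set K := LinearMap.ker (T : H →ₗ[ℝ] H)
  set P : H := (K.orthogonalProjectionOnto ψ : H)
  have hR : ∀ᶠ ρ : ℝ in atTop, ‖Ring.inverse (1 + ρ • T)‖ ≤ 1 := by
    filter_upwards [eventually_ge_atTop 0] with ρ hρ
    exact norm_ringInverse_one_add_smul_le_one hT_pos hρ
  have hclosure : ψ - P ∈ closure (LinearMap.range (T : H →ₗ[ℝ] H) : Set H) := by
    rw [← Submodule.topologicalClosure_coe, ← Submodule.orthogonal_orthogonal_eq_closure,
      hT_sa.isSymmetric.orthogonal_range]
    exact K.sub_starProjection_mem_orthogonal ψ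
  have hψP : Tendsto (fun ρ : ℝ ↦ Ring.inverse (1 + ρ • T) (ψ - P)) atTop (𝓝 0) :=
    tendsto_apply_zero_of_mem_closure hR
      (by rintro _ ⟨w, rfl⟩; exact tendsto_ringInverse_one_add_smul_apply_apply hT_pos w) hclosure
  have hP : ∀ᶠ ρ : ℝ in atTop, Ring.inverse (1 + ρ • T) P = P := by
    filter_upwards [eventually_ge_atTop 0] with ρ hρ
    exact ringInverse_one_add_smul_apply_of_apply_eq_zero hT_pos hρ
      (K.orthogonalProjectionOnto ψ).2
  refine (zero_add P ▸ hψP.add_const P).congr' ?_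
  filter_upwards [hP] with ρ hρ
  rw [map_sub, hρ, sub_add_cancel]

/-- For a compact positive self-adjoint operator `T` on a (separable) Hilbert
space, `(Id + ρT)⁻¹ ψ` converges, as `ρ → ∞`, to the orthogonal projection of `ψ` onto
`ker T`. -/
theorem penalized_resolvent_tendsto_kernel_projection
    {H : Type*} [NormedAddCommGroup H] [InnerProductSpace ℝ H] [CompleteSpace H]
    [TopologicalSpace.SeparableSpace H]
    (T : H →L[ℝ] H) (hT_cpt : IsCompactOperator T) (hT_sa : IsSelfAdjoint T)
    (hT_pos : ∀ x : H, 0 ≤ (inner ℝ (T x) x : ℝ)) (ψ : H) :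
    Filter.Tendsto
      (fun ρ : ℝ => Ring.inverse ((1 : H →L[ℝ] H) + ρ • T) ψ)
      Filter.atTop
      (nhds ((Submodule.orthogonalProjectionOnto (LinearMap.ker (T : H →ₗ[ℝ] H)) ψ : LinearMap.ker (T : H →ₗ[ℝ] H)) : H)) :=
  penalized_resolvent_tendsto_kernel_projection_general T hT_sa hT_pos ψ
end

section
/- In the linear IV model with F of full row rank q and Σ'_{XW}Σ_{XW} invertible, the penalized estimator φ_ρ = (ρ F'F + Σ'_{XW}Σ_{XW})⁻¹ Σ'_{XW} E[WY] satisfies lim_{ρ→∞} φ_ρ = φ - A⁻¹ F'(F A⁻¹ F')⁻¹ F φ, where A = Σ'_{XW}Σ_{XW} and φ = A⁻¹ Σ'_{XW}E[WY]; in particular lim_{ρ→∞} F φ_ρ = 0. -/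
/-!
By the Woodbury identity, for `ρ > 0`,
`(ρ F'F + A)⁻¹ = A⁻¹ - A⁻¹F'(ρ⁻¹ I + F A⁻¹ F')⁻¹ F A⁻¹`.
Since `F` has independent rows, `F A⁻¹ F'` is positive definite, hence invertible, and continuity
of matrix inversion at it lets `ρ⁻¹ I` drop out in the limit. The limit operator
`A⁻¹ - A⁻¹F'(F A⁻¹ F')⁻¹ F A⁻¹` is annihilated by `F`, which gives `F φ_ρ → 0`.
-/

open Matrix Filter Topology

namespace Matrix

theorem vecMul_injective_of_rank_eq_card {m n K : Type*} [Fintype m] [Fintype n] [Field K]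
    {M : Matrix m n K} (h : M.rank = Fintype.card m) : Function.Injective M.vecMul := by
  rw [vecMul_injective_iff, linearIndependent_iff_card_eq_finrank_span, Set.finrank,
    ← rank_eq_finrank_span_row, h]

theorem mul_sub_mul_mul_inv_mul_mul_eq_zero {m n R : Type*} [Fintype m] [Fintype n]
    [DecidableEq m] [CommRing R] (B : Matrix n n R) (F : Matrix m n R) (U : Matrix n m R)
    (hG : IsUnit (F * B * U)) :
    F * (B - B * U * (F * B * U)⁻¹ * F * B) = 0 := by
  rw [Matrix.mul_sub, sub_eq_zero]
  calc F * B = F * B * U * (F * B * U)⁻¹ * (F * B) := by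
        rw [mul_nonsing_inv _ ((isUnit_iff_isUnit_det _).mp hG), Matrix.one_mul]
    _ = F * (B * U * (F * B * U)⁻¹ * F * B) := by simp only [Matrix.mul_assoc]

theorem PosDef.mul_inv_mul_transpose {m n : Type*} [Fintype m] [Fintype n] [DecidableEq n]
    {A : Matrix n n ℝ} (hA : A.PosDef) {F : Matrix m n ℝ}
    (hF : Function.Injective F.vecMul) : (F * A⁻¹ * Fᵀ).PosDef := by
  simpa using hA.inv.mul_mul_conjTranspose_same hF

variable {m n : Type*} [Fintype m] [Fintype n] [DecidableEq m] [DecidableEq n]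

theorem inv_smul_one {K : Type*} [Field K] {ρ : K} (hρ : ρ ≠ 0) :
    (ρ • (1 : Matrix m m K))⁻¹ = ρ⁻¹ • 1 :=
  inv_eq_left_inv (by rw [smul_mul_smul_comm, inv_mul_cancel₀ hρ, one_smul, one_mul])

theorem smul_transpose_mul_self_add_inv {K : Type*} [Field K] {A : Matrix n n K} (hA : IsUnit A)
    (F : Matrix m n K) {ρ : K} (hρ : ρ ≠ 0) (hS : IsUnit (ρ⁻¹ • 1 + F * A⁻¹ * Fᵀ)) :
    (ρ • (Fᵀ * F) + A)⁻¹ = A⁻¹ - A⁻¹ * Fᵀ * (ρ⁻¹ • 1 + F * A⁻¹ * Fᵀ)⁻¹ * F * A⁻¹ := by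
  have hC : IsUnit (ρ • (1 : Matrix m m K)) := isUnit_one.smul (Units.mk0 ρ hρ)
  rw [show ρ • (Fᵀ * F) + A = A + Fᵀ * (ρ • (1 : Matrix m m K)) * F by simp [add_comm],
    add_mul_mul_inv_eq_sub A Fᵀ _ F hA hC (by rwa [inv_smul_one hρ]), inv_smul_one hρ]

theorem tendsto_inv_smul_one_add_inv {G : Matrix m m ℝ} (hG : IsUnit G) :
    Tendsto (fun ρ : ℝ => (ρ⁻¹ • (1 : Matrix m m ℝ) + G)⁻¹) atTop (𝓝 G⁻¹) := by
  have hlim : Tendsto (fun ρ : ℝ => ρ⁻¹ • (1 : Matrix m m ℝ) + G) atTop (𝓝 G) := by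
    simpa using ((tendsto_inv_atTop_zero (𝕜 := ℝ)).smul_const (1 : Matrix m m ℝ)).add_const G
  have hdet : G.det ≠ 0 := ((isUnit_iff_isUnit_det G).mp hG).ne_zero
  have hcont : ContinuousAt Inv.inv G :=
    continuousAt_matrix_inv G (by simpa using continuousAt_inv₀ hdet)
  exact hcont.tendsto.comp hlim

theorem tendsto_smul_transpose_mul_self_add_inv {A : Matrix n n ℝ} (hA : A.PosDef)
    {F : Matrix m n ℝ} (hF : Function.Injective F.vecMul) :
    Tendsto (fun ρ : ℝ => (ρ • (Fᵀ * F) + A)⁻¹) atTop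
      (𝓝 (A⁻¹ - A⁻¹ * Fᵀ * (F * A⁻¹ * Fᵀ)⁻¹ * F * A⁻¹)) := by
  have hG := hA.mul_inv_mul_transpose hF
  have hcont : Continuous fun X : Matrix m m ℝ => A⁻¹ - A⁻¹ * Fᵀ * X * F * A⁻¹ := by
    fun_prop
  refine ((hcont.tendsto _).comp (tendsto_inv_smul_one_add_inv hG.isUnit)).congr' ?_
  filter_upwards [eventually_gt_atTop 0] with ρ hρ
  have hS : (ρ⁻¹ • (1 : Matrix m m ℝ) + F * A⁻¹ * Fᵀ).PosDef :=
    (PosDef.one.smul (inv_pos.2 hρ)).add hG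
  exact (smul_transpose_mul_self_add_inv hA.isUnit F hρ.ne' hS.isUnit).symm

end Matrix

/-- Limit of the penalized linear IV estimator. With `A = Σ'_{XW}Σ_{XW}`
positive definite, `F` of full row rank `q`, and `b = Σ'_{XW}E[WY]`, the estimator
`φ_ρ = (ρ F'F + A)⁻¹ b` satisfies `φ_ρ → φ - A⁻¹F'(FA⁻¹F')⁻¹Fφ` as `ρ → ∞`, where
`φ = A⁻¹ b`; in particular `F φ_ρ → 0`. -/
theorem penalized_linear_iv_limit
    {p q : ℕ}
    (A : Matrix (Fin (p + q)) (Fin (p + q)) ℝ) (hA : A.PosDef)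
    (F : Matrix (Fin q) (Fin (p + q)) ℝ) (hF : F.rank = q)
    (b : Fin (p + q) → ℝ) :
    Tendsto (fun ρ : ℝ => (ρ • (Fᵀ * F) + A)⁻¹ *ᵥ b) atTop
        (nhds (A⁻¹ *ᵥ b - (A⁻¹ * Fᵀ * (F * A⁻¹ * Fᵀ)⁻¹ * F) *ᵥ (A⁻¹ *ᵥ b))) ∧
    Tendsto (fun ρ : ℝ => F *ᵥ ((ρ • (Fᵀ * F) + A)⁻¹ *ᵥ b)) atTop (nhds 0) := by
  have hF' : Function.Injective F.vecMul :=
    vecMul_injective_of_rank_eq_card (hF.trans (Fintype.card_fin q).symm)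
  set L := A⁻¹ - A⁻¹ * Fᵀ * (F * A⁻¹ * Fᵀ)⁻¹ * F * A⁻¹ with hL
  have hlim : Tendsto (fun ρ : ℝ => (ρ • (Fᵀ * F) + A)⁻¹ *ᵥ b) atTop (𝓝 (L *ᵥ b)) :=
    ((continuous_id.matrix_mulVec continuous_const).tendsto _).comp
      (tendsto_smul_transpose_mul_self_add_inv hA hF')
  refine ⟨by simpa only [hL, sub_mulVec, mulVec_mulVec] using hlim, ?_⟩
  have hzero : F *ᵥ (L *ᵥ b) = 0 := by
    rw [mulVec_mulVec, mul_sub_mul_mul_inv_mul_mul_eq_zero _ _ _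
      (hA.mul_inv_mul_transpose hF').isUnit, zero_mulVec]
  exact hzero ▸ ((continuous_const.matrix_mulVec continuous_id).tendsto _).comp hlim
end

section
/- Let K be a compact operator on a Hilbert space with K*K injective, α > 0, and suppose φ† = (K*K)^{β/2} w for some w ∈ H and 0 < β ≤ 2 (source condition). Then the Tikhonov bias satisfies ‖(αId+K*K)⁻¹K*Kφ† - φ†‖ = ‖α(αId+K*K)⁻¹ φ†‖ ≤ C α^{β/2} ‖w‖, where C = sup_{λ≥0} α^{1-β/2} λ^{β/2}/(α+λ) ≤ 1. -/
/-!
In the eigenbasis `e` of `K*K` the resolvent `(α + K*K)⁻¹` acts diagonally by `(α + λⱼ)⁻¹`, so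
the bias `α (α + K*K)⁻¹ φ†` has coefficients `α λⱼ^{β/2} ⟨eⱼ, w⟩ / (α + λⱼ)`. Weighted AM–GM,
`α^{1-β/2} λ^{β/2} ≤ (1 - β/2) α + (β/2) λ ≤ α + λ`, bounds the filter factor by `α^{β/2}`, and
Parseval turns this coefficientwise bound into the norm bound. The series defining `φ†` converges
since `λⱼ ≤ ‖K*K‖`. The identity of the two norms is `(α + K*K)⁻¹ K*K = 1 - α (α + K*K)⁻¹`,
where `α + K*K` is invertible because it is coercive.
-/

open scoped InnerProductSpace

theorem mul_rpow_div_add_le_rpow {α l t : ℝ} (hα : 0 < α) (hl : 0 ≤ l) (ht₀ : 0 ≤ t)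
    (ht₁ : t ≤ 1) : α * l ^ t / (α + l) ≤ α ^ t := by
  rw [div_le_iff₀ (by positivity)]
  have hsplit : α = α ^ t * α ^ (1 - t) := by
    rw [← Real.rpow_add hα, add_sub_cancel, Real.rpow_one]
  have amgm : α ^ (1 - t) * l ^ t ≤ (1 - t) * α + t * l :=
    Real.geom_mean_le_arith_mean2_weighted (by linarith) ht₀ hα.le hl (by ring)
  calc α * l ^ t = α ^ t * (α ^ (1 - t) * l ^ t) := by rw [← mul_assoc, ← hsplit]
    _ ≤ α ^ t * ((1 - t) * α + t * l) := by gcongr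
    _ ≤ α ^ t * (α + l) := by gcongr <;> nlinarith

theorem norm_mul_rpow_mul_div_add_le {α l t : ℝ} (hα : 0 < α) (hl : 0 ≤ l) (ht₀ : 0 ≤ t)
    (ht₁ : t ≤ 1) (x : ℝ) : ‖α * (l ^ t * x) / (α + l)‖ ≤ α ^ t * ‖x‖ := by
  have hfilter₀ : 0 ≤ α * l ^ t / (α + l) := by positivity
  calc ‖α * (l ^ t * x) / (α + l)‖ = α * l ^ t / (α + l) * ‖x‖ := by
        rw [← Real.norm_of_nonneg hfilter₀, ← norm_mul]
        ring_nf
    _ ≤ α ^ t * ‖x‖ := by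
        gcongr
        exact mul_rpow_div_add_le_rpow hα hl ht₀ ht₁

namespace HilbertBasis

variable {ι 𝕜 E : Type*} [RCLike 𝕜] [NormedAddCommGroup E] [InnerProductSpace 𝕜 E]
  (b : HilbertBasis ι 𝕜 E) {f : ι → 𝕜}

theorem repr_apply_of_hasSum {x : E} (hx : HasSum (fun i => f i • b i) x) (i : ι) :
    b.repr x i = f i := by
  classical
  have hcoord : HasSum (fun j => ⟪b i, f j • b j⟫_𝕜) (f i) := by
    convert hasSum_single (f := fun j => ⟪b i, f j • b j⟫_𝕜) i fun j hj => ?_ using 1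
    · simp [inner_smul_right, inner_self_eq_norm_sq_to_K, b.orthonormal.1 i]
    · simp [inner_smul_right, b.orthonormal.inner_eq_zero (Ne.symm hj)]
  rw [b.repr_apply_apply]
  exact (hx.mapL (innerSL 𝕜 (b i))).unique hcoord

theorem summable_smul_of_norm_le {C : ℝ} {w : E} (h : ∀ i, ‖f i‖ ≤ C * ‖⟪b i, w⟫_𝕜‖) :
    Summable fun i => f i • b i := by
  have hf : Memℓp f 2 :=
    ((b.repr w).2.norm.const_mul C).mono fun i => by simpa [b.repr_apply_apply] using h i
  exact ⟨_, b.hasSum_repr_symm ⟨f, hf⟩⟩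

theorem norm_le_of_hasSum {C : ℝ} (hC : 0 ≤ C) {x w : E} (hx : HasSum (fun i => f i • b i) x)
    (h : ∀ i, ‖f i‖ ≤ C * ‖⟪b i, w⟫_𝕜‖) : ‖x‖ ≤ C * ‖w‖ := by
  have hCw : ‖((C : 𝕜) • w)‖ = C * ‖w‖ := by
    rw [norm_smul, RCLike.norm_ofReal, abs_of_nonneg hC]
  rw [← hCw, ← b.repr.norm_map x, ← b.repr.norm_map]
  refine lp.norm_mono two_ne_zero fun i => ?_
  rw [b.repr_apply_of_hasSum hx, b.repr_apply_apply, inner_smul_right, norm_mul,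
    RCLike.norm_ofReal, abs_of_nonneg hC]
  exact h i

end HilbertBasis

namespace ContinuousLinearMap

theorem norm_le_opNorm_of_apply_eq_smul {𝕜 E : Type*} [NontriviallyNormedField 𝕜]
    [NormedAddCommGroup E] [NormedSpace 𝕜 E] {T : E →L[𝕜] E} {μ : 𝕜} {v : E} (hv : v ≠ 0)
    (h : T v = μ • v) : ‖μ‖ ≤ ‖T‖ := by
  refine le_of_mul_le_mul_right ?_ (norm_pos_iff.mpr hv)
  rw [← norm_smul, ← h]
  exact T.le_opNorm v

theorem ring_inverse_apply_of_apply_eq_smul {𝕜 E : Type*} [NontriviallyNormedField 𝕜]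
    [NormedAddCommGroup E] [NormedSpace 𝕜 E] {A : E →L[𝕜] E} (hA : IsUnit A) {μ : 𝕜} (hμ : μ ≠ 0)
    {v : E} (h : A v = μ • v) : Ring.inverse A v = μ⁻¹ • v := by
  have hinv : Ring.inverse A (A v) = v := by
    rw [← mul_apply_eq_comp, Ring.inverse_mul_cancel A hA, one_apply_eq_self]
  rw [h, map_smul] at hinv
  calc Ring.inverse A v = μ⁻¹ • μ • Ring.inverse A v := by rw [smul_smul, inv_mul_cancel₀ hμ, one_smul]
    _ = μ⁻¹ • v := by rw [hinv]

variable {E : Type*} [NormedAddCommGroup E] [InnerProductSpace ℝ E]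

theorem IsPositive.isUnit_smul_one_add [CompleteSpace E] {T : E →L[ℝ] E} (hT : T.IsPositive)
    {α : ℝ} (hα : 0 < α) : IsUnit (α • (1 : E →L[ℝ] E) + T) := by
  refine isUnit_of_forall_le_norm_inner_map _ (Real.toNNReal_pos.mpr hα) fun x => ?_
  have hTx : 0 ≤ ⟪T x, x⟫_ℝ := hT.inner_nonneg_left x
  rw [add_apply, smul_apply, one_apply_eq_self, inner_add_left, real_inner_smul_left,
    real_inner_self_eq_norm_sq, Real.norm_eq_abs, abs_of_nonneg (by positivity)]
  rw [Real.coe_toNNReal _ hα.le]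
  linarith

theorem ring_inverse_smul_one_add_apply_sub {T : E →L[ℝ] E} {α : ℝ}
    (hA : IsUnit (α • (1 : E →L[ℝ] E) + T)) (x : E) :
    Ring.inverse (α • 1 + T) (T x) - x = -(α • Ring.inverse (α • 1 + T) x) := by
  have hTx : T x = (α • 1 + T) x - α • x := by simp
  rw [hTx, map_sub, ← mul_apply_eq_comp, Ring.inverse_mul_cancel _ hA,
    one_apply_eq_self, map_smul]
  abel

end ContinuousLinearMap

open ContinuousLinearMap in
theorem tikhonov_bias_source_condition_general
    {H : Type*} [NormedAddCommGroup H] [InnerProductSpace ℝ H] [CompleteSpace H]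
    (K : H →L[ℝ] H)
    (e : HilbertBasis ℕ ℝ H) (l : ℕ → ℝ) (hl : ∀ j, 0 ≤ l j)
    (heig : ∀ j, (K.adjoint ∘L K) (e j) = l j • e j)
    (α β : ℝ) (hα : 0 < α) (hβ : 0 < β) (hβ2 : β ≤ 2)
    (w φd : H)
    (hsource : φd = ∑' j : ℕ, ((l j ^ (β / 2)) * (inner ℝ (e j) w : ℝ)) • e j) :
    ‖Ring.inverse (α • (1 : H →L[ℝ] H) + K.adjoint ∘L K) ((K.adjoint ∘L K) φd) - φd‖
        = ‖α • Ring.inverse (α • (1 : H →L[ℝ] H) + K.adjoint ∘L K) φd‖ ∧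
    ‖α • Ring.inverse (α • (1 : H →L[ℝ] H) + K.adjoint ∘L K) φd‖ ≤ α ^ (β / 2) * ‖w‖ := by
  set T := K.adjoint ∘L K
  have hunit : IsUnit (α • (1 : H →L[ℝ] H) + T) :=
    (isPositive_adjoint_comp_self K).isUnit_smul_one_add hα
  set R := Ring.inverse (α • (1 : H →L[ℝ] H) + T)
  have hαl : ∀ j, 0 < α + l j := fun j => by linarith [hl j]
  have hRe (j : ℕ) : R (e j) = (α + l j)⁻¹ • e j :=
    ring_inverse_apply_of_apply_eq_smul hunit (hαl j).ne' (by simp [T, heig, add_smul])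
  set c : ℕ → ℝ := fun j => l j ^ (β / 2) * ⟪e j, w⟫_ℝ
  have hc (j : ℕ) : ‖c j‖ ≤ ‖T‖ ^ (β / 2) * ‖⟪e j, w⟫_ℝ‖ := by
    have hlT : l j ≤ ‖T‖ := by
      simpa [abs_of_nonneg (hl j)] using
        norm_le_opNorm_of_apply_eq_smul (e.orthonormal.ne_zero j) (heig j)
    rw [norm_mul, Real.norm_of_nonneg (Real.rpow_nonneg (hl j) _)]
    gcongr
    exact hl j
  have hφd : HasSum (fun j => c j • e j) φd := hsource ▸ (e.summable_smul_of_norm_le hc).hasSum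
  have hbias : HasSum (fun j => (α * c j / (α + l j)) • e j) (α • R φd) := by
    have hmap := hφd.mapL (α • R)
    simp only [smul_apply, map_smul, hRe, smul_smul] at hmap
    convert hmap using 3 with j
    field_simp
  refine ⟨by rw [ring_inverse_smul_one_add_apply_sub hunit, norm_neg], ?_⟩
  refine e.norm_le_of_hasSum (by positivity) hbias fun j => ?_
  exact norm_mul_rpow_mul_div_add_le hα (hl j) (by positivity) (by linarith) _

/-- Tikhonov bias under a source condition. `K` is compact with `K*K`
injective; `K*K` has spectral decomposition with orthonormal eigenbasis `(e j)` and
eigenvalues `l j ≥ 0`, and `φ† = (K*K)^{β/2} w = Σ_j l_j^{β/2} ⟨e_j, w⟩ e_j` for some `w`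
and `0 < β ≤ 2` (source condition). Then the Tikhonov bias satisfies
`‖(αId+K*K)⁻¹K*Kφ† - φ†‖ = ‖α(αId+K*K)⁻¹φ†‖ ≤ α^{β/2}‖w‖` (the spectral constant
`C = sup_{λ≥0} α^{1-β/2}λ^{β/2}/(α+λ)` being at most 1). -/
theorem tikhonov_bias_source_condition
    {H : Type*} [NormedAddCommGroup H] [InnerProductSpace ℝ H] [CompleteSpace H]
    (K : H →L[ℝ] H) (hK_cpt : IsCompactOperator K)
    (hKK_inj : Function.Injective (K.adjoint ∘L K))
    (e : HilbertBasis ℕ ℝ H) (l : ℕ → ℝ) (hl : ∀ j, 0 ≤ l j)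
    (heig : ∀ j, (K.adjoint ∘L K) (e j) = l j • e j)
    (α β : ℝ) (hα : 0 < α) (hβ : 0 < β) (hβ2 : β ≤ 2)
    (w φd : H)
    (hsource : φd = ∑' j : ℕ, ((l j ^ (β / 2)) * (inner ℝ (e j) w : ℝ)) • e j) :
    ‖Ring.inverse (α • (1 : H →L[ℝ] H) + K.adjoint ∘L K) ((K.adjoint ∘L K) φd) - φd‖
        = ‖α • Ring.inverse (α • (1 : H →L[ℝ] H) + K.adjoint ∘L K) φd‖ ∧
    ‖α • Ring.inverse (α • (1 : H →L[ℝ] H) + K.adjoint ∘L K) φd‖ ≤ α ^ (β / 2) * ‖w‖ :=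
  tikhonov_bias_source_condition_general K e l hl heig α β hα hβ hβ2 w φd hsource
end
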